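/- arXiv:2512.05779 — 3 statements merged into one kernel-verified Lean document; each statement's English description precedes it below -/
import Mathlib

section
/- Let c > 0, L = c + 1/2 + sqrt(c + 1/4), and let (a_n) be a sequence of reals with a_0 > L and a_{n+1} = sqrt(a_n) + c for all n. Then for every n, 0 ≤ a_n ≤ a_0^(1/2^n) + L. -/
/-! `L` is the positive fixed point of `x ↦ √x + c`, so `√L = L - c`. Taking square roots of
`aₙ ≤ a₀^(1/2ⁿ) + L` and using subadditivity of `√` gives
`aₙ₊₁ ≤ a₀^(1/2ⁿ⁺¹) + √L + c = a₀^(1/2ⁿ⁺¹) + L`. -/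

open Real

lemma Real.sqrt_add_le_sqrt_add_sqrt {x y : ℝ} (hx : 0 ≤ x) (hy : 0 ≤ y) :
    √(x + y) ≤ √x + √y := by
  rw [sqrt_le_iff]
  refine ⟨by positivity, ?_⟩
  nlinarith [sq_sqrt hx, sq_sqrt hy, sqrt_nonneg x, sqrt_nonneg y]

lemma Real.sqrt_rpow_one_div_two_pow {x : ℝ} (hx : 0 ≤ x) (n : ℕ) :
    √(x ^ (1 / (2 : ℝ) ^ n)) = x ^ (1 / (2 : ℝ) ^ (n + 1)) := by
  rw [sqrt_eq_rpow, ← rpow_mul hx, pow_succ]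
  ring_nf

lemma sqrt_add_half_add_sqrt_add_quarter {c : ℝ} (hc : -1 / 4 ≤ c) :
    √(c + 1 / 2 + √(c + 1 / 4)) = 1 / 2 + √(c + 1 / 4) := by
  have hs : √(c + 1 / 4) ^ 2 = c + 1 / 4 := sq_sqrt (by linarith)
  have hc' : 0 ≤ c + 1 / 2 + √(c + 1 / 4) := by linarith [sqrt_nonneg (c + 1 / 4)]
  rw [sqrt_eq_iff_eq_sq hc' (by positivity)]
  linear_combination -hs

section SqrtRecurrence

variable {a : ℕ → ℝ} {c : ℝ}

lemma nonneg_of_sqrt_add_recurrence (ha : ∀ n, a (n + 1) = √(a n) + c) (hc : 0 ≤ c)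
    (ha0 : 0 ≤ a 0) (n : ℕ) : 0 ≤ a n := by
  cases n with
  | zero => exact ha0
  | succ n => rw [ha n]; positivity

lemma le_rpow_add_of_sqrt_add_recurrence (ha : ∀ n, a (n + 1) = √(a n) + c) {L : ℝ}
    (hL : 0 ≤ L) (hsqrtL : √L ≤ L - c) (ha0 : 0 ≤ a 0) (n : ℕ) :
    a n ≤ a 0 ^ (1 / (2 : ℝ) ^ n) + L := by
  induction n with
  | zero => simpa using hL
  | succ n ih =>
    have hpow : 0 ≤ a 0 ^ (1 / (2 : ℝ) ^ n) := rpow_nonneg ha0 _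
    calc a (n + 1) = √(a n) + c := ha n
      _ ≤ √(a 0 ^ (1 / (2 : ℝ) ^ n) + L) + c := by gcongr
      _ ≤ √(a 0 ^ (1 / (2 : ℝ) ^ n)) + √L + c := by
        gcongr; exact sqrt_add_le_sqrt_add_sqrt hpow hL
      _ ≤ a 0 ^ (1 / (2 : ℝ) ^ (n + 1)) + L := by
        rw [sqrt_rpow_one_div_two_pow ha0]; linarith

end SqrtRecurrence

theorem iterated_radicals_bound (c : ℝ) (hc : 0 < c)
    (L : ℝ) (hL : L = c + 1/2 + Real.sqrt (c + 1/4))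
    (a : ℕ → ℝ) (ha0 : a 0 > L)
    (ha : ∀ n, a (n + 1) = Real.sqrt (a n) + c) :
    ∀ n, 0 ≤ a n ∧ a n ≤ a 0 ^ (1 / (2 : ℝ) ^ n) + L := by
  have hL0 : 0 ≤ L := by rw [hL]; positivity
  have hsqrtL : √L = L - c := by
    rw [hL, sqrt_add_half_add_sqrt_add_quarter (by linarith)]; ring
  have ha0' : 0 ≤ a 0 := by linarith
  exact fun n => ⟨nonneg_of_sqrt_add_recurrence ha hc.le ha0' n,
    le_rpow_add_of_sqrt_add_recurrence ha hL0 hsqrtL.le ha0' n⟩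
end

section
/- Let c > 0, L = c + 1/2 + sqrt(c + 1/4), and let (a_n) satisfy a_0 > L and a_{n+1} = sqrt(a_n) + c. Then a_n converges to L as n → ∞. -/
/-!
Put `r = √(c + 1/4) + 1/2`, so that `L = r ^ 2` and `c = r ^ 2 - r`. For `x > L` the map
`f x = √x + c` satisfies `L < f x < x`: with `y = √x > r` these read `y > r` and
`(y - r) (y + r - 1) > 0`. Hence `(a n)` decreases and stays above `L`; its limit is a fixed
point of the continuous map `f` that is `≥ L`, and it cannot exceed `L` since `f` moves every
such point strictly down.
-/

open Filter Topology Function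

theorem tendsto_iterate_of_lt_apply_lt {α : Type*} [ConditionallyCompleteLinearOrder α]
    [TopologicalSpace α] [OrderTopology α] {f : α → α} (hf : Continuous f) {L : α}
    (hf_gt : ∀ x, L < x → L < f x) (hf_lt : ∀ x, L < x → f x < x) {x : α} (hx : L < x) :
    Tendsto (fun n => f^[n] x) atTop (𝓝 L) := by
  have h_gt (n : ℕ) : L < f^[n] x := by
    induction n with
    | zero => exact hx
    | succ n ih => simpa only [iterate_succ_apply'] using hf_gt _ ih
  have h_anti : Antitone fun n => f^[n] x := antitone_nat_of_succ_le fun n => by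
    simpa only [iterate_succ_apply'] using (hf_lt _ (h_gt n)).le
  have h_lim := tendsto_atTop_ciInf h_anti ⟨L, by rintro _ ⟨n, rfl⟩; exact (h_gt n).le⟩
  have h_fixed : IsFixedPt f (⨅ n, f^[n] x) := isFixedPt_of_tendsto_iterate h_lim hf.continuousAt
  have h_ge : L ≤ ⨅ n, f^[n] x := le_ciInf fun n => (h_gt n).le
  obtain h_eq | h_lt := h_ge.eq_or_lt
  · rwa [← h_eq] at h_lim
  · exact absurd h_fixed (hf_lt _ h_lt).ne

theorem sq_lt_sqrt_add_sq_sub {r x : ℝ} (hx : r ^ 2 < x) :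
    r ^ 2 < √x + (r ^ 2 - r) := by
  have : r < √x := Real.lt_sqrt_of_sq_lt hx
  linarith

theorem sqrt_add_sq_sub_lt {r x : ℝ} (hr : 1 / 2 ≤ r) (hx : r ^ 2 < x) :
    √x + (r ^ 2 - r) < x := by
  have hr_lt : r < √x := Real.lt_sqrt_of_sq_lt hx
  have hx_sq : √x ^ 2 = x := Real.sq_sqrt (by nlinarith)
  nlinarith [mul_pos (sub_pos.2 hr_lt) (show 0 < √x + r - 1 by linarith)]

theorem iterated_radicals_tendsto (c : ℝ) (hc : 0 < c)
    (L : ℝ) (hL : L = c + 1/2 + Real.sqrt (c + 1/4))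
    (a : ℕ → ℝ) (ha0 : a 0 > L)
    (ha : ∀ n, a (n + 1) = Real.sqrt (a n) + c) :
    Filter.Tendsto a Filter.atTop (nhds L) := by
  set r := √(c + 1 / 4) + 1 / 2
  have hr_ge : 1 / 2 ≤ r := le_add_of_nonneg_left (Real.sqrt_nonneg _)
  have hs : √(c + 1 / 4) ^ 2 = c + 1 / 4 := Real.sq_sqrt (by positivity)
  have hc_eq : c = r ^ 2 - r := by linear_combination (-1 : ℝ) * hs
  have hL_eq : L = r ^ 2 := by linear_combination hL - hs
  have ha_iter : a = fun n => (fun x => √x + c)^[n] (a 0) := by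
    funext n
    induction n with
    | zero => rfl
    | succ n ih => rw [iterate_succ_apply', ← ih, ha]
  rw [hL_eq] at ha0 ⊢
  rw [ha_iter, hc_eq]
  exact tendsto_iterate_of_lt_apply_lt (by fun_prop) (fun _ => sq_lt_sqrt_add_sq_sub)
    (fun _ => sqrt_add_sq_sub_lt hr_ge) ha0
end

section
/- Let D be a 4-regular multigraph with vertex set V(D) and let K be a graph in which every vertex is incident to exactly one 'labeled' edge, the labels being in bijection with V(D), such that two vertices of K joined by an unlabeled edge carry labels that are adjacent or equal in D. If D has a tree decomposition of width w, then K has a tree decomposition of width at most 2(w+1) − 1, i.e., tw(K) + 1 ≤ 2(tw(D) + 1). -/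
/-!
Pull a tree decomposition of `D` back along the labelling `ℓ`: replace each bag by the vertices
of `K` whose label lies in it. Since every edge of `K` joins vertices with equal or `D`-adjacent
labels, edges are still covered; the bags containing a vertex `z` are exactly those containing
`ℓ z`, so they still form a subtree; and each label is carried by the two endpoints of one
matching edge only, so bag sizes at most double.
-/

/-- `G` admits a tree decomposition all of whose bags have at most `w + 1` vertices. -/
def HasTreeDecompositionOfWidthLE {V : Type} (G : SimpleGraph V) (w : ℕ) : Prop :=
  ∃ (ι : Type) (T : SimpleGraph ι) (B : ι → Finset V),
    T.IsTree ∧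
    (∀ v : V, ∃ i, v ∈ B i) ∧
    (∀ u v : V, G.Adj u v → ∃ i, u ∈ B i ∧ v ∈ B i) ∧
    (∀ v : V, (T.induce {i | v ∈ B i}).Connected) ∧
    (∀ i, (B i).card ≤ w + 1)

/-- The treewidth of `G`: the least width of a tree decomposition of `G`. -/
noncomputable def treewidth {V : Type} (G : SimpleGraph V) : ℕ :=
  sInf {w | HasTreeDecompositionOfWidthLE G w}

namespace HasTreeDecompositionOfWidthLE

variable {V VD VK : Type}

theorem of_fintype [Fintype V] (G : SimpleGraph V) :
    HasTreeDecompositionOfWidthLE G (Fintype.card V) := by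
  refine ⟨Unit, ⊥, fun _ => Finset.univ, .of_subsingleton, fun v => ⟨(), Finset.mem_univ v⟩,
    fun u v _ => ⟨(), Finset.mem_univ u, Finset.mem_univ v⟩, fun v => ?_, fun _ => Nat.le_succ _⟩
  have : Nonempty {i : Unit | v ∈ (Finset.univ : Finset V)} := ⟨⟨(), Finset.mem_univ v⟩⟩
  exact .of_subsingleton

theorem comap {D : SimpleGraph VD} {K : SimpleGraph VK} {w : ℕ}
    (hD : HasTreeDecompositionOfWidthLE D w) (f : VK → VD)
    (hf : ∀ u v, K.Adj u v → f u = f v ∨ D.Adj (f u) (f v))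
    (fib : VD → Finset VK) (hfib : ∀ d z, z ∈ fib d ↔ f z = d)
    {k w' : ℕ} (hk : ∀ d, (fib d).card ≤ k) (hw : k * (w + 1) ≤ w' + 1) :
    HasTreeDecompositionOfWidthLE K w' := by
  classical
  obtain ⟨ι, T, B, hT, hcov, hadj, hconn, hcard⟩ := hD
  have hmem : ∀ i z, z ∈ (B i).biUnion fib ↔ f z ∈ B i := by
    simp [Finset.mem_biUnion, hfib]
  refine ⟨ι, T, fun i => (B i).biUnion fib, hT, fun z => ?_, fun u v huv => ?_,
    fun z => ?_, fun i => ?_⟩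
  · obtain ⟨i, hi⟩ := hcov (f z)
    exact ⟨i, (hmem i z).2 hi⟩
  · simp only [hmem]
    rcases hf u v huv with h | h
    · obtain ⟨i, hi⟩ := hcov (f u)
      exact ⟨i, hi, h ▸ hi⟩
    · exact hadj _ _ h
  · have hbags : {i | z ∈ (B i).biUnion fib} = {i | f z ∈ B i} := Set.ext fun i => hmem i z
    exact hbags ▸ hconn (f z)
  · calc ((B i).biUnion fib).card ≤ ∑ d ∈ B i, (fib d).card := Finset.card_biUnion_le
      _ ≤ (B i).card * k := Finset.sum_le_card_nsmul _ _ _ fun d _ => hk d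
      _ ≤ (w + 1) * k := Nat.mul_le_mul_right k (hcard i)
      _ ≤ w' + 1 := by rwa [mul_comm]

end HasTreeDecompositionOfWidthLE

theorem hasTreeDecompositionOfWidthLE_treewidth {V : Type} [Fintype V] (G : SimpleGraph V) :
    HasTreeDecompositionOfWidthLE G (treewidth G) :=
  Nat.sInf_mem (s := {w | HasTreeDecompositionOfWidthLE G w}) ⟨_, .of_fintype G⟩

theorem treewidth_le {V : Type} {G : SimpleGraph V} {w : ℕ}
    (h : HasTreeDecompositionOfWidthLE G w) : treewidth G ≤ w :=
  Nat.sInf_le h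

theorem treewidth_kuperberg_network_general {VD VK : Type} [Fintype VD]
    (D : SimpleGraph VD) (K : SimpleGraph VK)
    (m : VK → VK)            -- the perfect matching, as an involution
    (ℓ : VK → VD)            -- label of the matching edge containing a vertex
    (hℓ_match : ∀ z, ℓ (m z) = ℓ z)
    (hℓ_surj : ∀ d : VD, ∃ z : VK, ℓ z = d)
    (hℓ_inj : ∀ z w : VK, ℓ z = ℓ w → w = z ∨ w = m z)
    (hedge : ∀ z w : VK, K.Adj z w → w ≠ m z → ℓ z = ℓ w ∨ D.Adj (ℓ z) (ℓ w)) :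
    treewidth K + 1 ≤ 2 * (treewidth D + 1) := by
  classical
  choose s hs using hℓ_surj
  have hfib : ∀ d z, z ∈ ({s d, m (s d)} : Finset VK) ↔ ℓ z = d := by
    intro d z
    constructor
    · rw [Finset.mem_insert, Finset.mem_singleton]
      rintro (rfl | rfl)
      · exact hs d
      · rw [hℓ_match, hs]
    · rintro rfl
      rw [Finset.mem_insert, Finset.mem_singleton]
      exact hℓ_inj _ _ (hs (ℓ z))
  have hK_edge : ∀ u v, K.Adj u v → ℓ u = ℓ v ∨ D.Adj (ℓ u) (ℓ v) := by
    intro u v huv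
    by_cases hv : v = m u
    · exact .inl (hv ▸ (hℓ_match u).symm)
    · exact hedge u v huv hv
  have hK := (hasTreeDecompositionOfWidthLE_treewidth D).comap ℓ hK_edge _ hfib
    (fun _ => Finset.card_le_two) (w' := 2 * treewidth D + 1) (by omega)
  have := treewidth_le hK
  omega

theorem treewidth_kuperberg_network {VD VK : Type} [Fintype VD] [Fintype VK]
    (D : SimpleGraph VD) (K : SimpleGraph VK)
    (m : VK → VK)            -- the perfect matching, as an involution
    (hm_invol : ∀ z, m (m z) = z)
    (hm_ne : ∀ z, m z ≠ z)
    (hm_adj : ∀ z, K.Adj z (m z))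
    (ℓ : VK → VD)            -- label of the matching edge containing a vertex
    (hℓ_match : ∀ z, ℓ (m z) = ℓ z)
    (hℓ_surj : ∀ d : VD, ∃ z : VK, ℓ z = d)
    (hℓ_inj : ∀ z w : VK, ℓ z = ℓ w → w = z ∨ w = m z)
    (hedge : ∀ z w : VK, K.Adj z w → w ≠ m z → ℓ z = ℓ w ∨ D.Adj (ℓ z) (ℓ w)) :
    treewidth K + 1 ≤ 2 * (treewidth D + 1) :=
  treewidth_kuperberg_network_general D K m ℓ hℓ_match hℓ_surj hℓ_inj hedge
end
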